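/- Binet-type formula for Markov–Pell polynomials: let x, y, z be positive real numbers, set D = (x^2+y^2)^4 + 2z^2(x^2+y^2)^3 + z^4(x^2−y^2)^2, λ1 = ((x^2+y^2)(x^2+y^2+z^2) + √D)/2 and λ2 = ((x^2+y^2)(x^2+y^2+z^2) − √D)/2. Then D > 0, and for every integer k ≥ 0, R_{2k+1}(x,y,z) = ((λ1 − y^2 z^2)/√D)·(λ1^k − λ2^k) + λ2^k. -/
import Mathlib


open MvPolynomial

/-- The Markov–Pell polynomials `R n ∈ ℤ[x,y,z]` (with `x = X 0`, `y = X 1`, `z = X 2`),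
defined by `R 0 = 0`, `R 1 = 1`, and for `k ≥ 1`,
`R (2k) = (x²+y²)·R (2k-1) + y²z²·R (2k-2)` and
`R (2k+1) = (x²+y²)·R (2k) + x²z²·R (2k-1)`.
(Here `n + 2` is even iff `n` is even, whence the choice of `y` or `x` below.) -/
noncomputable def pellR : ℕ → MvPolynomial (Fin 3) ℤ
  | 0 => 0
  | 1 => 1
  | (n + 2) => (X 0 ^ 2 + X 1 ^ 2) * pellR (n + 1)
      + (if n % 2 = 0 then X 1 else X 0) ^ 2 * X 2 ^ 2 * pellR n

/-- The discriminant `D = (x²+y²)⁴ + 2z²(x²+y²)³ + z⁴(x²-y²)²`. -/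
noncomputable def pellD (x y z : ℝ) : ℝ :=
  (x ^ 2 + y ^ 2) ^ 4 + 2 * z ^ 2 * (x ^ 2 + y ^ 2) ^ 3 + z ^ 4 * (x ^ 2 - y ^ 2) ^ 2

/-- `λ₁ = ((x²+y²)(x²+y²+z²) + √D)/2`. -/
noncomputable def pellLam1 (x y z : ℝ) : ℝ :=
  ((x ^ 2 + y ^ 2) * (x ^ 2 + y ^ 2 + z ^ 2) + Real.sqrt (pellD x y z)) / 2

/-- `λ₂ = ((x²+y²)(x²+y²+z²) - √D)/2`. -/
noncomputable def pellLam2 (x y z : ℝ) : ℝ :=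
  ((x ^ 2 + y ^ 2) * (x ^ 2 + y ^ 2 + z ^ 2) - Real.sqrt (pellD x y z)) / 2

/-- Binet-type formula for the Markov–Pell polynomials: for positive reals `x, y, z`,
`D > 0` and `R_{2k+1}(x,y,z) = ((λ₁ - y²z²)/√D)·(λ₁^k - λ₂^k) + λ₂^k` for all `k ≥ 0`. -/
theorem pell_binet (x y z : ℝ) (hx : 0 < x) (hy : 0 < y) (hz : 0 < z) :
    0 < pellD x y z ∧
    ∀ k : ℕ,
      MvPolynomial.aeval ![x, y, z] (pellR (2 * k + 1)) =
        ((pellLam1 x y z - y ^ 2 * z ^ 2) / Real.sqrt (pellD x y z)) *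
            (pellLam1 x y z ^ k - pellLam2 x y z ^ k)
          + pellLam2 x y z ^ k := by
  have hD : 0 < pellD x y z := by unfold pellD; positivity
  refine ⟨hD, ?_⟩
  have hsqpos : 0 < Real.sqrt (pellD x y z) := Real.sqrt_pos.mpr hD
  have hsq : Real.sqrt (pellD x y z) ^ 2 = pellD x y z := Real.sq_sqrt hD.le
  set r := Real.sqrt (pellD x y z) with hr
  set s : ℕ → ℝ := fun n => MvPolynomial.aeval ![x, y, z] (pellR n) with hs
  have hrec : ∀ n : ℕ, s (n + 2) =
      (x ^ 2 + y ^ 2) * s (n + 1) + (if n % 2 = 0 then y else x) ^ 2 * z ^ 2 * s n := by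
    intro n
    simp only [hs]
    rw [pellR]
    split_ifs <;> simp [Matrix.cons_val_zero, Matrix.cons_val_one, Matrix.head_cons]
  have hs0 : s 0 = 0 := by simp [hs, pellR]
  have hs1 : s 1 = 1 := by simp [hs, pellR]
  set T : ℝ := (x ^ 2 + y ^ 2) * (x ^ 2 + y ^ 2 + z ^ 2) with hT
  set N : ℝ := x ^ 2 * y ^ 2 * z ^ 4 with hN
  have hodd : ∀ k : ℕ, s (2 * k + 5) = T * s (2 * k + 3) - N * s (2 * k + 1) := by
    intro k
    have h1 := hrec (2 * k + 3)
    have h2 := hrec (2 * k + 2)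
    have h3 := hrec (2 * k + 1)
    have e1 : (2 * k + 3) % 2 = 1 := by omega
    have e2 : (2 * k + 2) % 2 = 0 := by omega
    have e3 : (2 * k + 1) % 2 = 1 := by omega
    rw [e1] at h1; rw [e2] at h2; rw [e3] at h3
    norm_num at h1 h2 h3
    have h5 : (2 * k + 3) + 2 = 2 * k + 5 := by ring
    have h4 : (2 * k + 2) + 2 = 2 * k + 4 := by ring
    rw [h5] at h1
    rw [h4] at h2
    rw [show (2 * k + 1) + 2 = 2 * k + 3 by ring] at h3
    rw [show (2 * k + 3) + 1 = 2 * k + 4 by ring] at h1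
    rw [show (2 * k + 2) + 1 = 2 * k + 3 by ring] at h2
    rw [show (2 * k + 1) + 1 = 2 * k + 2 by ring] at h3
    rw [hT, hN]
    linear_combination h1 + (x ^ 2 + y ^ 2) * h2 - y ^ 2 * z ^ 2 * h3
  set L1 := pellLam1 x y z with hL1
  set L2 := pellLam2 x y z with hL2
  have hsum : L1 + L2 = T := by
    rw [hL1, hL2, hT]; unfold pellLam1 pellLam2; rw [← hr]; ring
  have hdiff : L1 - L2 = r := by
    rw [hL1, hL2]; unfold pellLam1 pellLam2; rw [← hr]; ring
  have hprod : L1 * L2 = N := by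
    rw [hL1, hL2, hN]; unfold pellLam1 pellLam2; rw [← hr]
    have : r ^ 2 = pellD x y z := hsq
    unfold pellD at this
    linear_combination (-(1:ℝ)/4) * this
  set c : ℝ := (L1 - y ^ 2 * z ^ 2) / r with hc
  set f : ℕ → ℝ := fun k => c * (L1 ^ k - L2 ^ k) + L2 ^ k with hf
  have hq1 : L1 ^ 2 = T * L1 - N := by
    have : L1 ^ 2 - (L1 + L2) * L1 + L1 * L2 = 0 := by ring
    rw [hsum, hprod] at this; linarith
  have hq2 : L2 ^ 2 = T * L2 - N := by
    have : L2 ^ 2 - (L1 + L2) * L2 + L1 * L2 = 0 := by ring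
    rw [hsum, hprod] at this; linarith
  have hfrec : ∀ k : ℕ, f (k + 2) = T * f (k + 1) - N * f k := by
    intro k
    simp only [hf]
    have e1 : L1 ^ (k + 2) = (T * L1 - N) * L1 ^ k := by rw [← hq1]; ring
    have e2 : L2 ^ (k + 2) = (T * L2 - N) * L2 ^ k := by rw [← hq2]; ring
    have e3 : L1 ^ (k + 1) = L1 * L1 ^ k := by ring
    have e4 : L2 ^ (k + 1) = L2 * L2 ^ k := by ring
    rw [e1, e2, e3, e4]; ring
  have hf0 : f 0 = s 1 := by simp [hf, hs1]
  have hf1 : f 1 = s 3 := by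
    have h3 : s 3 = (x ^ 2 + y ^ 2) * s 2 + x ^ 2 * z ^ 2 * s 1 := by
      have := hrec 1
      simpa using this
    have h2 : s 2 = (x ^ 2 + y ^ 2) * s 1 + y ^ 2 * z ^ 2 * s 0 := by
      have := hrec 0
      simpa using this
    rw [h3, h2, hs0, hs1]
    simp only [hf, pow_one]
    have hcr : c * r = L1 - y ^ 2 * z ^ 2 := by
      rw [hc]; field_simp
    have : c * (L1 - L2) + L2 = L1 + L2 - y ^ 2 * z ^ 2 := by
      rw [hdiff, hcr]; ring
    rw [this, hsum, hT]; ring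
  suffices H : ∀ k : ℕ, s (2 * k + 1) = f k ∧ s (2 * (k + 1) + 1) = f (k + 1) by
    intro k
    exact (H k).1
  intro k
  induction k with
  | zero => exact ⟨hf0.symm, by simpa using hf1.symm⟩
  | succ n ih =>
    refine ⟨ih.2, ?_⟩
    have := hodd n
    rw [show 2 * n + 5 = 2 * (n + 1 + 1) + 1 by ring, show 2 * n + 3 = 2 * (n + 1) + 1 by ring] at this
    rw [this, ih.1, ih.2, hfrec n]
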